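/- arXiv:2102.02182 — 7 statements merged into one kernel-verified Lean document; each statement's English description precedes it below -/
import Mathlib

section
/- Let H be the hypergraph with vertex set V = {a,b,c,d,e} and edge set E = {{a,c},{b,e},{b,d},{c,e},{a,d}}. Then the 2-fold conflict-free chromatic number of H equals 5, i.e., χ_{2,CF}(H) = 5. In particular χ_{2,CF}(H) < 2·χ_{CF}(H) = 6. -/
/-- `C` is a `k`-fold conflict-free coloring of the hypergraph with edge set `E`. -/
def IsKFoldCF {V α : Type*} [DecidableEq α] (E : Finset (Finset V)) (k : ℕ)
    (C : V → Finset α) : Prop :=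
  (∀ v, (C v).card = k) ∧
    ∀ e ∈ E, ∃ v ∈ e, ∀ u ∈ e, u ≠ v → Disjoint (C v) (C u)

/-- The `k`-fold conflict-free chromatic number. -/
noncomputable def chiCF {V : Type*} (E : Finset (Finset V)) (k : ℕ) : ℕ :=
  sInf {L | ∃ C : V → Finset (Fin L), IsKFoldCF E k C}

/-- The hypergraph on `{a,b,c,d,e}` (encoded as `0,1,2,3,4`) with edges
`{a,c},{b,e},{b,d},{c,e},{a,d}`. -/
def Eex : Finset (Finset (Fin 5)) :=
  {{0, 2}, {1, 4}, {1, 3}, {2, 4}, {0, 3}}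

lemma pairCF {α : Type*} [DecidableEq α] (C : Fin 5 → Finset α) {x y : Fin 5} (hxy : x ≠ y)
    (h : ∃ v ∈ ({x, y} : Finset (Fin 5)), ∀ u ∈ ({x, y} : Finset (Fin 5)), u ≠ v →
      Disjoint (C v) (C u)) : Disjoint (C x) (C y) := by
  obtain ⟨v, hv, h⟩ := h
  simp only [Finset.mem_insert, Finset.mem_singleton] at hv
  rcases hv with rfl | rfl
  · exact h y (by simp) hxy.symm
  · exact (h x (by simp) hxy).symm

lemma eq_compl {α : Type*} [Fintype α] [DecidableEq α] {s t : Finset α} (h : Disjoint s t)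
    (hst : s.card + t.card = Fintype.card α) : t = sᶜ := by
  have hsub : t ⊆ sᶜ := by
    intro a ha
    simp only [Finset.mem_compl]
    exact fun hs => (Finset.disjoint_left.mp h hs) ha
  refine Finset.eq_of_subset_of_card_le hsub ?_
  rw [Finset.card_compl]
  omega

lemma chainFalse {α : Type*} [Fintype α] [DecidableEq α] (C : Fin 5 → Finset α) (k : ℕ)
    (hk : 0 < k) (hcard : ∀ v, (C v).card = k) (hα : Fintype.card α = 2 * k)
    (d02 : Disjoint (C 0) (C 2)) (d24 : Disjoint (C 2) (C 4)) (d14 : Disjoint (C 1) (C 4))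
    (d13 : Disjoint (C 1) (C 3)) (d03 : Disjoint (C 0) (C 3)) : False := by
  have hsum : ∀ u v : Fin 5, (C u).card + (C v).card = Fintype.card α := by
    intro u v; rw [hcard, hcard]; omega
  have h2 : C 2 = (C 0)ᶜ := eq_compl d02 (hsum 0 2)
  have h4 : C 4 = (C 2)ᶜ := eq_compl d24 (hsum 2 4)
  have h1 : C 1 = (C 4)ᶜ := eq_compl d14.symm (hsum 4 1)
  have h3 : C 3 = (C 1)ᶜ := eq_compl d13 (hsum 1 3)
  have h30 : C 3 = C 0 := by rw [h3, h1, h4, h2, compl_compl, compl_compl]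
  rw [h30, Finset.disjoint_self_iff_empty] at d03
  have := hcard 0
  rw [d03] at this
  simp at this
  omega

lemma lower_gen (k : ℕ) (hk : 0 < k) :
    ∀ L : ℕ, (∃ C : Fin 5 → Finset (Fin L), IsKFoldCF Eex k C) → 2 * k + 1 ≤ L := by
  intro L ⟨C, hcard, hCF⟩
  have mem : ∀ x y : Fin 5, ({x, y} : Finset (Fin 5)) ∈ Eex →
      x ≠ y → Disjoint (C x) (C y) := fun x y he hxy => pairCF C hxy (hCF _ he)
  have d02 := mem 0 2 (by decide) (by decide)
  have d14 := mem 1 4 (by decide) (by decide)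
  have d13 := mem 1 3 (by decide) (by decide)
  have d24 := mem 2 4 (by decide) (by decide)
  have d03 := mem 0 3 (by decide) (by decide)
  have hL : 2 * k ≤ L := by
    have := Finset.card_le_univ (C 0 ∪ C 2)
    rw [Finset.card_union_of_disjoint d02, hcard, hcard] at this
    have hc : Fintype.card (Fin L) = L := by simp
    omega
  rcases Nat.lt_or_ge (2 * k) L with h | h
  · omega
  · exfalso
    have hLeq : L = 2 * k := le_antisymm h hL
    exact chainFalse C k hk hcard (by simp [hLeq]) d02 d24 d14 d13 d03

/-- The 2-fold conflict-free chromatic number of this hypergraph is `5`; in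
particular it is strictly less than `2 · χ_CF = 6`. -/
theorem stmt_2 : chiCF Eex 2 = 5 ∧ chiCF Eex 2 < 2 * chiCF Eex 1 := by
  have h5 : (5 : ℕ) ∈ {L | ∃ C : Fin 5 → Finset (Fin L), IsKFoldCF Eex 2 C} :=
    ⟨![{0, 1}, {1, 2}, {2, 3}, {3, 4}, {4, 0}], by unfold IsKFoldCF Eex; decide⟩
  have h3 : (3 : ℕ) ∈ {L | ∃ C : Fin 5 → Finset (Fin L), IsKFoldCF Eex 1 C} :=
    ⟨![{0}, {1}, {1}, {2}, {0}], by unfold IsKFoldCF Eex; decide⟩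
  have e2 : chiCF Eex 2 = 5 := by
    refine le_antisymm (Nat.sInf_le h5) (le_csInf ⟨5, h5⟩ ?_)
    intro L hL
    exact lower_gen 2 (by norm_num) L hL
  have e1 : chiCF Eex 1 = 3 := by
    refine le_antisymm (Nat.sInf_le h3) (le_csInf ⟨3, h3⟩ ?_)
    intro L hL
    exact lower_gen 1 (by norm_num) L hL
  rw [e2, e1]
  norm_num
end

section
/- For the PICOD problem represented by a hypergraph H = ([m], 𝔍), if C : [m] → (k-subsets of [L]) is a k-fold conflict-free coloring of H, then the L × mk indicator matrix G of C (whose column G_{i,j} is the standard basis vector e_{C_{i,j}}) satisfies every receiver: for each edge I_r ∈ 𝔍 there exists d ∈ I_r such that dim(span{G_{d,j} : j ∈ [k]}) = k and span{G_{d,j} : j ∈ [k]} ∩ span{G_{i,j} : i ∈ I_r \ {d}, j ∈ [k]} = {0}. -/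
/-- Submodule of vectors supported in `S`. -/
def suppSub (F : Type*) [Field F] {L : ℕ} (S : Set (Fin L)) : Submodule F (Fin L → F) where
  carrier := {x | ∀ l, l ∉ S → x l = 0}
  add_mem' := by intro a b ha hb l hl; simp [ha l hl, hb l hl]
  zero_mem' := by intro l hl; rfl
  smul_mem' := by intro r a ha l hl; simp [ha l hl]

lemma span_single_le {F : Type*} [Field F] {L : ℕ} {S : Set (Fin L)}
    (T : Set (Fin L → F)) (hT : ∀ x ∈ T, ∃ a ∈ S, x = Pi.single a 1) :
    Submodule.span F T ≤ suppSub F S := by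
  rw [Submodule.span_le]
  intro x hx
  obtain ⟨a, ha, rfl⟩ := hT x hx
  intro l hl
  exact Pi.single_eq_of_ne (fun h => hl (by rw [h]; exact ha)) 1

lemma li_single {F : Type*} [Field F] {L k : ℕ} (f : Fin k → Fin L)
    (hf : Function.Injective f) :
    LinearIndependent F (fun j => (Pi.single (f j) 1 : Fin L → F)) := by
  have h := (Pi.basisFun F (Fin L)).linearIndependent.comp f hf
  convert h using 1
  funext j
  simp [Pi.basisFun_apply]

/-- A matrix `G` (columns indexed by `(i,j) ∈ [m]×[k]`, each column a vector `ι → F`)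
satisfies the receiver with request-set `I` if some `d ∈ I` has its `k` columns
spanning a `k`-dimensional space which meets the span of the columns of all other
members of `I` trivially. -/
def SatisfiesReceiver {F ι : Type*} [Field F] {m k : ℕ}
    (G : Fin m → Fin k → ι → F) (I : Finset (Fin m)) : Prop :=
  ∃ d ∈ I,
    Module.finrank F (Submodule.span F (Set.range (G d))) = k ∧
    Submodule.span F (Set.range (G d)) ⊓
      Submodule.span F {x | ∃ i ∈ I, i ≠ d ∧ ∃ j : Fin k, x = G i j} = ⊥

/-- For a PICOD hypergraph `([m], 𝔍)` and a `k`-fold conflict-free coloring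
(given by the color enumeration `c i j` of vertex `i`, with the `k` colors of each
vertex distinct), the indicator matrix `G`, whose column `(i,j)` is the standard
basis vector `e_{c i j}` of `F^L`, satisfies every receiver. -/
theorem stmt_3 {F : Type*} [Field F] {m k L : ℕ}
    (𝔍 : Finset (Finset (Fin m)))
    (c : Fin m → Fin k → Fin L)
    (hinj : ∀ i, Function.Injective (c i))
    (hCF : ∀ e ∈ 𝔍, ∃ d ∈ e, ∀ i ∈ e, i ≠ d → ∀ j j' : Fin k, c d j ≠ c i j') :
    ∀ e ∈ 𝔍,
      SatisfiesReceiver (fun i j => (Pi.single (c i j) 1 : Fin L → F)) e := by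
  intro e he
  obtain ⟨d, hd, hdis⟩ := hCF e he
  refine ⟨d, hd, ?_, ?_⟩
  · have hli : LinearIndependent F (fun j => (Pi.single (c d j) 1 : Fin L → F)) :=
      li_single (c d) (hinj d)
    have h := finrank_span_eq_card hli
    rw [Fintype.card_fin] at h
    exact h
  · rw [eq_bot_iff]
    intro x hx
    obtain ⟨hx1, hx2⟩ := Submodule.mem_inf.mp hx
    have h1 : x ∈ suppSub F (Set.range (c d)) := by
      refine span_single_le _ ?_ hx1
      rintro _ ⟨j, rfl⟩
      exact ⟨c d j, ⟨j, rfl⟩, rfl⟩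
    have h2 : x ∈ suppSub F {l : Fin L | ∃ i ∈ e, i ≠ d ∧ ∃ j : Fin k, l = c i j} := by
      refine span_single_le _ ?_ hx2
      rintro _ ⟨i, hi, hne, j, rfl⟩
      exact ⟨c i j, ⟨i, hi, hne, j, rfl⟩, rfl⟩
    simp only [Submodule.mem_bot]
    funext l
    by_cases hl : l ∈ Set.range (c d)
    · refine h2 l ?_
      rintro ⟨i, hi, hne, j, hlj⟩
      obtain ⟨j', hj'⟩ := hl
      exact hdis i hi hne j' j (hj'.trans hlj)
    · exact h1 l hl
end

section
/- For any PICOD hypergraph H, the optimal length of a k-vector linear pliable index code is at most the k-fold conflict-free chromatic number: ℓ*_k(H) ≤ χ_{k,CF}(H). -/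
/-- The optimal length of a `k`-vector linear pliable index code over `F`. -/
noncomputable def optLen (F : Type*) [Field F] (m k : ℕ)
    (𝔍 : Finset (Finset (Fin m))) : ℕ :=
  sInf {L | ∃ G : Fin m → Fin k → Fin L → F, ∀ e ∈ 𝔍, SatisfiesReceiver G e}

open Submodule

section CodeOfColoring

variable {F : Type*} [Field F] {m k L : ℕ}

noncomputable def codeOfColoring (C : Fin m → Finset (Fin L)) (hC : ∀ i, (C i).card = k) :
    Fin m → Fin k → Fin L → F :=
  fun i j => Pi.basisFun F (Fin L) ((C i).orderEmbOfFin (hC i) j)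

variable {C : Fin m → Finset (Fin L)} {hC : ∀ i, (C i).card = k}

theorem finrank_span_range_codeOfColoring (i : Fin m) :
    Module.finrank F (span F (Set.range (codeOfColoring (F := F) C hC i))) = k :=
  (finrank_span_eq_card ((Pi.basisFun F (Fin L)).linearIndependent.comp _
    ((C i).orderEmbOfFin (hC i)).injective)).trans (Fintype.card_fin k)

theorem span_range_codeOfColoring (i : Fin m) :
    span F (Set.range (codeOfColoring (F := F) C hC i)) =
      span F (Pi.basisFun F (Fin L) '' C i) := by
  rw [← Finset.range_orderEmbOfFin (C i) (hC i), ← Set.range_comp]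
  rfl

theorem span_codeOfColoring_erase_le (I : Finset (Fin m)) (d : Fin m) :
    span F {x | ∃ i ∈ I, i ≠ d ∧ ∃ j : Fin k, x = codeOfColoring C hC i j} ≤
      span F (Pi.basisFun F (Fin L) '' ↑((I.erase d).biUnion C)) := by
  refine span_mono ?_
  rintro _ ⟨i, hi, hid, j, rfl⟩
  refine ⟨_, ?_, rfl⟩
  exact Finset.mem_biUnion.mpr ⟨i, Finset.mem_erase.mpr ⟨hid, hi⟩, Finset.orderEmbOfFin_mem _ _ _⟩

theorem satisfiesReceiver_codeOfColoring {I : Finset (Fin m)} {d : Fin m} (hd : d ∈ I)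
    (hdisj : ∀ u ∈ I, u ≠ d → Disjoint (C d) (C u)) :
    SatisfiesReceiver (codeOfColoring (F := F) C hC) I := by
  refine ⟨d, hd, finrank_span_range_codeOfColoring d, ?_⟩
  have hcolors : Disjoint (C d : Set (Fin L)) ↑((I.erase d).biUnion C) := by
    rw [Finset.disjoint_coe, Finset.disjoint_biUnion_right]
    exact fun u hu => hdisj u (Finset.mem_of_mem_erase hu) (Finset.ne_of_mem_erase hu)
  rw [← disjoint_iff, span_range_codeOfColoring]
  exact ((Pi.basisFun F (Fin L)).linearIndependent.disjoint_span_image hcolors).mono_right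
    (span_codeOfColoring_erase_le I d)

end CodeOfColoring

theorem optLen_le_of_isKFoldCF {F : Type*} [Field F] {m k L : ℕ} {𝔍 : Finset (Finset (Fin m))}
    {C : Fin m → Finset (Fin L)} (hC : IsKFoldCF 𝔍 k C) : optLen F m k 𝔍 ≤ L := by
  obtain ⟨hcard, hcf⟩ := hC
  refine Nat.sInf_le ⟨codeOfColoring C hcard, fun e he => ?_⟩
  obtain ⟨d, hd, hdisj⟩ := hcf e he
  exact satisfiesReceiver_codeOfColoring hd hdisj

/-- The optimal `k`-vector linear PIC length is at most the `k`-fold conflict-free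
chromatic number: `ℓ*_k(H) ≤ χ_{k,CF}(H)`. -/
theorem stmt_4 {F : Type*} [Field F] (m k : ℕ) (𝔍 : Finset (Finset (Fin m)))
    (h : {L | ∃ C : Fin m → Finset (Fin L), IsKFoldCF 𝔍 k C}.Nonempty) :
    optLen F m k 𝔍 ≤ chiCF 𝔍 k := by
  obtain ⟨C, hC⟩ := Nat.sInf_mem h
  exact optLen_le_of_isKFoldCF hC
end

section
/- For any PICOD hypergraph H, the optimal length of a k-vector linear pliable index code is at most the k-fold conflict-free covering number: ℓ*_k(H) ≤ α_{k,CF}(H). -/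
/-- The set of achievable total color counts `Σ_p L_p` over conflict-free
collections of `k`-fold colorings. -/
def CFCollections {V : Type*} (E : Finset (Finset V)) (k : ℕ) : Set ℕ :=
  {S | ∃ (P : ℕ) (L : Fin P → ℕ) (C : ∀ p : Fin P, V → Finset (Fin (L p))),
    (∀ p v, (C p v).card = k) ∧
    (∀ e ∈ E, ∃ p, ∃ v ∈ e, ∀ u ∈ e, u ≠ v → Disjoint (C p v) (C p u)) ∧
    S = ∑ p, L p}

/-- The `k`-fold conflict-free covering number. -/
noncomputable def alphaCF {V : Type*} (E : Finset (Finset V)) (k : ℕ) : ℕ :=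
  sInf (CFCollections E k)

lemma construct_aux {F : Type*} [Field F] {m k P : ℕ} (𝔍 : Finset (Finset (Fin m)))
    (L : Fin P → ℕ) (C : ∀ p : Fin P, Fin m → Finset (Fin (L p)))
    (hcard : ∀ p v, (C p v).card = k)
    (hcf : ∀ e ∈ 𝔍, ∃ p, ∃ v ∈ e, ∀ u ∈ e, u ≠ v → Disjoint (C p v) (C p u)) :
    ∃ G : Fin m → Fin k → Fin (∑ p, L p) → F, ∀ e ∈ 𝔍, SatisfiesReceiver G e := by
  classical
  let E : (Σ p : Fin P, Fin (L p)) ≃ Fin (∑ p, L p) :=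
    Fintype.equivFinOfCardEq (by simp)
  let col : ∀ p (v : Fin m), Fin k → Fin (L p) :=
    fun p v j => ((C p v).orderIsoOfFin (hcard p v) j : Fin (L p))
  have hcolmem : ∀ p v j, col p v j ∈ C p v := fun p v j =>
    ((C p v).orderIsoOfFin (hcard p v) j).2
  have hcolinj : ∀ p v, Function.Injective (col p v) := by
    intro p v a b hab
    exact (((C p v).orderIsoOfFin (hcard p v)).injective (Subtype.ext hab))
  let G : Fin m → Fin k → Fin (∑ p, L p) → F := fun v j x =>
    if (E.symm x).2 = col (E.symm x).1 v j then 1 else 0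
  refine ⟨G, fun e he => ?_⟩
  obtain ⟨p₀, d, hd, hdisj⟩ := hcf e he
  -- projection onto the coordinates of d's colors in block p₀
  let π : (Fin (∑ p, L p) → F) →ₗ[F] (Fin k → F) :=
    LinearMap.funLeft F F (fun j : Fin k => E ⟨p₀, col p₀ d j⟩)
  have hval : ∀ (v : Fin m) (j j' : Fin k),
      π (G v j) j' = if col p₀ d j' = col p₀ v j then 1 else 0 := by
    intro v j j'
    show G v j (E ⟨p₀, col p₀ d j'⟩) = _
    simp only [G]
    rw [show E.symm (E ⟨p₀, col p₀ d j'⟩) = ⟨p₀, col p₀ d j'⟩ from E.symm_apply_apply _]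
  have hπd : ∀ j, π (G d j) = Pi.single j (1 : F) := by
    intro j
    funext j'
    rw [hval d j j', Pi.single_apply]
    by_cases hjj : j' = j
    · simp [hjj]
    · rw [if_neg hjj, if_neg (fun hc => hjj (hcolinj p₀ d hc))]
  have hπ0 : ∀ i ∈ e, i ≠ d → ∀ j, π (G i j) = 0 := by
    intro i hi hne j
    funext j'
    rw [hval i j j']
    rw [if_neg, Pi.zero_apply]
    intro hceq
    exact (Finset.disjoint_left.mp (hdisj i hi hne)) (hcolmem p₀ d j')
      (hceq ▸ hcolmem p₀ i j)
  have hli : LinearIndependent F (G d) := by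
    apply LinearIndependent.of_comp π
    have hcomp : π ∘ G d = fun j => Pi.single j (1 : F) := funext hπd
    rw [hcomp]
    rw [Fintype.linearIndependent_iff]
    intro g hg j
    have := congrFun hg j
    simpa [Pi.single_apply] using this
  refine ⟨d, hd, ?_, ?_⟩
  · rw [finrank_span_eq_card hli, Fintype.card_fin]
  · rw [eq_bot_iff]
    intro x hx
    rw [Submodule.mem_inf] at hx
    obtain ⟨hx1, hx2⟩ := hx
    have hπx : π x = 0 := by
      have hle : Submodule.span F {x | ∃ i ∈ e, i ≠ d ∧ ∃ j : Fin k, x = G i j} ≤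
          LinearMap.ker π := by
        rw [Submodule.span_le]
        rintro y ⟨i, hi, hne, j, rfl⟩
        exact hπ0 i hi hne j
      exact hle hx2
    obtain ⟨c, hc⟩ := (Submodule.mem_span_range_iff_exists_fun F).mp hx1
    have hc0 : ∀ j, c j = 0 := by
      intro j
      have h1 : π (∑ j, c j • G d j) = 0 := by rw [hc]; exact hπx
      rw [map_sum] at h1
      simp only [map_smul, hπd] at h1
      have := congrFun h1 j
      simpa [Pi.single_apply] using this
    rw [Submodule.mem_bot, ← hc]
    simp [hc0]

/-- The optimal `k`-vector linear PIC length is at most the `k`-fold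
conflict-free covering number: `ℓ*_k(H) ≤ α_{k,CF}(H)`. -/
theorem stmt_9 {F : Type*} [Field F] (m k : ℕ) (𝔍 : Finset (Finset (Fin m)))
    (h : (CFCollections 𝔍 k).Nonempty) :
    optLen F m k 𝔍 ≤ alphaCF 𝔍 k := by
  have hmem : alphaCF 𝔍 k ∈ CFCollections 𝔍 k := Nat.sInf_mem h
  obtain ⟨P, L, C, hcard, hcf, hS⟩ := hmem
  obtain ⟨G, hG⟩ := construct_aux (F := F) 𝔍 L C hcard hcf
  have : optLen F m k 𝔍 ≤ ∑ p, L p := Nat.sInf_le ⟨G, hG⟩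
  exact hS ▸ this
end

section
/- For any hypergraph H, the minimum size of an essential color set over all k-fold conflict-free colorings, D_min := min over conflict-free colorings C and essential color sets D_C of |D_C|, satisfies χ_{k,CF}(H) − k ≤ D_min ≤ χ_{k,CF}(H). -/
/-- Edge `e` is satisfied by the color subset `D` under coloring `C`: some vertex
of `e` has all its colors in `D` and its color set disjoint from all other
vertices of `e`. -/
def EdgeSat {V α : Type*} [DecidableEq α] (C : V → Finset α) (D : Finset α)
    (e : Finset V) : Prop :=
  ∃ v ∈ e, C v ⊆ D ∧ ∀ u ∈ e, u ≠ v → Disjoint (C v) (C u)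

/-- The minimum size of an essential color set, over all `k`-fold conflict-free
colorings of the hypergraph with edge set `E`. -/
noncomputable def Dmin {V : Type*} (E : Finset (Finset V)) (k : ℕ) : ℕ :=
  sInf {d | ∃ (L : ℕ) (C : V → Finset (Fin L)) (D : Finset (Fin L)),
    IsKFoldCF E k C ∧ (∀ e ∈ E, EdgeSat C D e) ∧ D.card = d}

/-- `χ_{k,CF}(H) − k ≤ D_min ≤ χ_{k,CF}(H)`. -/
theorem stmt_14 {V : Type*} (E : Finset (Finset V)) (k : ℕ)
    (h : {L | ∃ C : V → Finset (Fin L), IsKFoldCF E k C}.Nonempty) :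
    chiCF E k - k ≤ Dmin E k ∧ Dmin E k ≤ chiCF E k := by
  classical
  obtain ⟨C0, hC0⟩ : ∃ C : V → Finset (Fin (chiCF E k)), IsKFoldCF E k C := Nat.sInf_mem h
  have hmem : (chiCF E k) ∈ {d | ∃ (L : ℕ) (C : V → Finset (Fin L)) (D : Finset (Fin L)),
      IsKFoldCF E k C ∧ (∀ e ∈ E, EdgeSat C D e) ∧ D.card = d} := by
    refine ⟨chiCF E k, C0, Finset.univ, hC0, ?_, by simp⟩
    intro e he
    obtain ⟨v, hv, hd⟩ := hC0.2 e he
    exact ⟨v, hv, Finset.subset_univ _, hd⟩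
  have hup : Dmin E k ≤ chiCF E k := Nat.sInf_le hmem
  refine ⟨?_, hup⟩
  obtain ⟨L, C, D, hCF, hsat, hcard⟩ := Nat.sInf_mem ⟨_, hmem⟩
  -- injectivity of the map into the first block
  have hinj : ∀ (x y : Fin L) (hx : x ∈ D) (hy : y ∈ D),
      Fin.castAdd k (D.equivFin ⟨x, hx⟩) = Fin.castAdd k (D.equivFin ⟨y, hy⟩) → x = y := by
    intro x y hx hy hxy
    have h1 : D.equivFin ⟨x, hx⟩ = D.equivFin ⟨y, hy⟩ := by
      apply Fin.ext
      simpa using congrArg Fin.val hxy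
    have := D.equivFin.injective h1
    exact Subtype.ext_iff.mp this
  have hkey : (D.card + k) ∈ {L | ∃ C : V → Finset (Fin L), IsKFoldCF E k C} := by
    refine ⟨fun v => if hv : C v ⊆ D then (C v).attach.image
        (fun x => Fin.castAdd k (D.equivFin ⟨x.1, hv x.2⟩))
      else Finset.univ.image (Fin.natAdd D.card), ?_, ?_⟩
    · intro v
      by_cases hv : C v ⊆ D
      · simp only [dif_pos hv]
        rw [Finset.card_image_of_injective, Finset.card_attach, hCF.1]
        intro x y hxy
        exact Subtype.ext (hinj _ _ _ _ hxy)
      · simp only [dif_neg hv]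
        rw [Finset.card_image_of_injective, Finset.card_univ, Fintype.card_fin]
        intro i j hij
        apply Fin.ext
        have := congrArg Fin.val hij
        simpa using this
    · intro e he
      obtain ⟨v, hv, hvD, hdisj⟩ := hsat e he
      refine ⟨v, hv, ?_⟩
      intro u hu hne'
      simp only [dif_pos hvD]
      by_cases hu' : C u ⊆ D
      · simp only [dif_pos hu']
        rw [Finset.disjoint_left]
        rintro a ha hb
        simp only [Finset.mem_image, Finset.mem_attach, true_and, Subtype.exists] at ha hb
        obtain ⟨x, hx, hxa⟩ := ha
        obtain ⟨y, hy, hyb⟩ := hb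
        have : x = y := hinj _ _ _ _ (hxa.trans hyb.symm)
        subst this
        exact Finset.disjoint_left.mp (hdisj u hu hne') hx hy
      · simp only [dif_neg hu']
        rw [Finset.disjoint_left]
        rintro a ha hb
        simp only [Finset.mem_image, Finset.mem_attach, true_and, Subtype.exists,
          Finset.mem_univ] at ha hb
        obtain ⟨x, hx, hxa⟩ := ha
        obtain ⟨j, hjb⟩ := hb
        have hxy := congrArg Fin.val (hxa.trans hjb.symm)
        simp only [Fin.coe_castAdd, Fin.coe_natAdd] at hxy
        have h2 := (D.equivFin ⟨x, hvD hx⟩).isLt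
        omega
  have := Nat.sInf_le hkey
  have hle : chiCF E k ≤ Dmin E k + k := by
    rw [show Dmin E k = D.card from hcard.symm]; exact this
  omega
end

section
/- Let H_m be the complete 2-uniform hypergraph on m ≥ 3 vertices. Then the 1-fold local conflict-free chromatic number Δ_1(H_m) equals 2. -/
/-- The `k`-fold local conflict-free chromatic number `Δ_k(H)`: the minimum, over
`k`-fold conflict-free colorings `C` and essential color sets `D` (sets satisfying
every edge), of the maximum over edges `e` of the number of colors of `D`
appearing on `e`. -/
noncomputable def DeltaK {V : Type*} (E : Finset (Finset V)) (k : ℕ) : ℕ :=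
  sInf {d | ∃ (L : ℕ) (C : V → Finset (Fin L)) (D : Finset (Fin L)),
    IsKFoldCF E k C ∧ (∀ e ∈ E, EdgeSat C D e) ∧
    ∀ e ∈ E, ((e.biUnion C) ∩ D).card ≤ d}

/-!
In a conflict-free coloring of the complete graph every two vertices have disjoint color
sets, and an essential color set `D` must contain the colors of at least one endpoint of
every edge, so at most one vertex has colors outside `D`. With at least three vertices some
edge has both color sets inside `D`, which gives `2k` colors of `D` on that edge. For
`k = 1` the coloring by distinct singletons with `D` the whole palette attains `2`.
-/

open Finset

section DeltaK

variable {V : Type*} {E : Finset (Finset V)} {k : ℕ}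

theorem deltaK_le {L d : ℕ} (C : V → Finset (Fin L)) (D : Finset (Fin L))
    (hC : IsKFoldCF E k C) (hD : ∀ e ∈ E, EdgeSat C D e)
    (hd : ∀ e ∈ E, ((e.biUnion C) ∩ D).card ≤ d) : DeltaK E k ≤ d :=
  Nat.sInf_le ⟨L, C, D, hC, hD, hd⟩

theorem exists_coloring_deltaK {L d : ℕ} {C : V → Finset (Fin L)} {D : Finset (Fin L)}
    (hC : IsKFoldCF E k C) (hD : ∀ e ∈ E, EdgeSat C D e)
    (hd : ∀ e ∈ E, ((e.biUnion C) ∩ D).card ≤ d) :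
    ∃ (L' : ℕ) (C' : V → Finset (Fin L')) (D' : Finset (Fin L')),
      IsKFoldCF E k C' ∧ (∀ e ∈ E, EdgeSat C' D' e) ∧
        ∀ e ∈ E, ((e.biUnion C') ∩ D').card ≤ DeltaK E k := by
  have hne : {d | ∃ (L : ℕ) (C : V → Finset (Fin L)) (D : Finset (Fin L)),
      IsKFoldCF E k C ∧ (∀ e ∈ E, EdgeSat C D e) ∧
        ∀ e ∈ E, ((e.biUnion C) ∩ D).card ≤ d}.Nonempty := ⟨d, L, C, D, hC, hD, hd⟩
  exact Nat.sInf_mem hne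

end DeltaK

section Coloring

variable {V α : Type*} [DecidableEq α] {E : Finset (Finset V)} {k : ℕ} {C : V → Finset α}

theorem IsKFoldCF.disjoint_of_pair_mem [DecidableEq V] (hC : IsKFoldCF E k C) {x y : V}
    (hxy : x ≠ y) (he : {x, y} ∈ E) : Disjoint (C x) (C y) := by
  obtain ⟨v, hv, hdisj⟩ := hC.2 _ he
  rw [mem_insert, mem_singleton] at hv
  rcases hv with rfl | rfl
  · exact hdisj y (by simp) hxy.symm
  · exact (hdisj x (by simp) hxy).symm

theorem IsKFoldCF.edgeSat_univ [Fintype α] (hC : IsKFoldCF E k C) :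
    ∀ e ∈ E, EdgeSat C univ e := fun e he =>
  let ⟨v, hv, hdisj⟩ := hC.2 e he
  ⟨v, hv, subset_univ _, hdisj⟩

theorem EdgeSat.subset_or_subset_of_pair [DecidableEq V] {D : Finset α} {x y : V}
    (h : EdgeSat C D {x, y}) : C x ⊆ D ∨ C y ⊆ D := by
  obtain ⟨v, hv, hvD, -⟩ := h
  rw [mem_insert, mem_singleton] at hv
  rcases hv with rfl | rfl
  exacts [Or.inl hvD, Or.inr hvD]

theorem isKFoldCF_singleton [DecidableEq V] (hE : ∀ e ∈ E, e.Nonempty) :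
    IsKFoldCF E 1 (fun v : V => ({v} : Finset V)) := by
  refine ⟨fun _ => card_singleton _, fun e he => ?_⟩
  obtain ⟨v, hv⟩ := hE e he
  exact ⟨v, hv, fun u _ huv => disjoint_singleton.2 huv.symm⟩

end Coloring

section CompleteGraph

variable {V α : Type*} [Fintype V] [DecidableEq V] [DecidableEq α] {C : V → Finset α}
  {D : Finset α}

theorem pair_mem_powersetCard_two {x y : V} (hxy : x ≠ y) :
    ({x, y} : Finset V) ∈ (univ : Finset V).powersetCard 2 :=
  mem_powersetCard_univ.2 (card_pair hxy)

theorem card_filter_not_subset_le_one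
    (hD : ∀ e ∈ (univ : Finset V).powersetCard 2, EdgeSat C D e) :
    (univ.filter fun v => ¬ C v ⊆ D).card ≤ 1 := by
  refine card_le_one.2 fun x hx y hy => by_contra fun hxy => ?_
  rcases (hD _ (pair_mem_powersetCard_two hxy)).subset_or_subset_of_pair with h | h
  exacts [(mem_filter.1 hx).2 h, (mem_filter.1 hy).2 h]

theorem exists_pair_subset (hV : 3 ≤ Fintype.card V)
    (hD : ∀ e ∈ (univ : Finset V).powersetCard 2, EdgeSat C D e) :
    ∃ x y, x ≠ y ∧ C x ⊆ D ∧ C y ⊆ D := by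
  have hsplit := card_filter_add_card_filter_not (s := (univ : Finset V)) fun v => C v ⊆ D
  have hbad := card_filter_not_subset_le_one hD
  have hgood : 1 < (univ.filter fun v => C v ⊆ D).card := by
    rw [card_univ] at hsplit
    omega
  obtain ⟨x, hx, y, hy, hxy⟩ := one_lt_card.1 hgood
  exact ⟨x, y, hxy, (mem_filter.1 hx).2, (mem_filter.1 hy).2⟩

theorem exists_edge_two_mul_le_card {k : ℕ} (hV : 3 ≤ Fintype.card V)
    (hC : IsKFoldCF ((univ : Finset V).powersetCard 2) k C)
    (hD : ∀ e ∈ (univ : Finset V).powersetCard 2, EdgeSat C D e) :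
    ∃ e ∈ (univ : Finset V).powersetCard 2, 2 * k ≤ ((e.biUnion C) ∩ D).card := by
  obtain ⟨x, y, hxy, hx, hy⟩ := exists_pair_subset hV hD
  have he := pair_mem_powersetCard_two hxy
  refine ⟨{x, y}, he, le_of_eq ?_⟩
  have hunion : ({x, y} : Finset V).biUnion C ∩ D = C x ∪ C y := by
    rw [biUnion_insert, singleton_biUnion, inter_eq_left]
    exact union_subset hx hy
  rw [hunion, card_union_of_disjoint (hC.disjoint_of_pair_mem hxy he), hC.1, hC.1, two_mul]

end CompleteGraph

/-- For the complete 2-uniform hypergraph on `m ≥ 3` vertices, the 1-fold local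
conflict-free chromatic number equals `2`. -/
theorem stmt_15 (m : ℕ) (hm : 3 ≤ m) :
    DeltaK ((Finset.univ : Finset (Fin m)).powersetCard 2) 1 = 2 := by
  have hC := isKFoldCF_singleton (E := (univ : Finset (Fin m)).powersetCard 2) fun e he =>
    card_pos.1 (by rw [mem_powersetCard_univ.1 he]; norm_num)
  have hbound : ∀ e ∈ (univ : Finset (Fin m)).powersetCard 2,
      ((e.biUnion fun v => {v}) ∩ univ).card ≤ 2 := fun e he => by
    rw [biUnion_singleton_eq_self, inter_univ, mem_powersetCard_univ.1 he]
  refine le_antisymm (deltaK_le _ _ hC hC.edgeSat_univ hbound) ?_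
  obtain ⟨L, C, D, hC', hD', hd⟩ := exists_coloring_deltaK hC hC.edgeSat_univ hbound
  obtain ⟨e, he, htwo⟩ := exists_edge_two_mul_le_card (by simpa using hm) hC' hD'
  simpa using htwo.trans (hd e he)
end

section
/- For any PICOD hypergraph H, the optimal k-vector linear PIC length is at most the k-fold local conflict-free chromatic number: ℓ*_k(H) ≤ Δ_k(H), over a sufficiently large finite field. Concretely: given a k-fold conflict-free coloring C with essential color set D_C, |D_C| = D, Δ = Δ_{C,D_C}(H), and a Δ × D MDS generator matrix G' (any Δ columns linearly independent) over a field of size ≥ D, the Δ × mk matrix G (whose column (i,j) is G'(C_{i,j}) if C_{i,j} ∈ D_C and 0 otherwise) satisfies every receiver. -/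
/-- (MDS matrix construction for PICOD.) Let `c` enumerate a `k`-fold coloring of
the PICOD hypergraph `([m], 𝔍)` (the `k` colors of each vertex being distinct),
let `DC` be an essential color set for it, and let `Δ` bound the number of colors
of `DC` appearing on each edge. Let `G'` be an MDS matrix with `Δ` rows and
columns indexed by colors, i.e. any at most `Δ` columns indexed by `DC` are
linearly independent. Then the `Δ × mk` matrix `G`, whose column `(i,j)` is
`G'(c i j)` if `c i j ∈ DC` and `0` otherwise, satisfies every receiver; hence
`ℓ*_k(H) ≤ Δ_k(H)` over a sufficiently large field. -/
theorem stmt_16 {F : Type*} [Field F] {m k L Δ : ℕ}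
    (𝔍 : Finset (Finset (Fin m)))
    (c : Fin m → Fin k → Fin L)
    (hinj : ∀ i, Function.Injective (c i))
    (DC : Finset (Fin L))
    (hess : ∀ e ∈ 𝔍, ∃ v ∈ e, (∀ j, c v j ∈ DC) ∧
      ∀ u ∈ e, u ≠ v → ∀ j j' : Fin k, c v j ≠ c u j')
    (hΔ : ∀ e ∈ 𝔍,
      ((e.biUnion fun i => Finset.image (c i) Finset.univ) ∩ DC).card ≤ Δ)
    (G' : Fin L → Fin Δ → F)
    (hMDS : ∀ S : Finset (Fin L), S ⊆ DC → S.card ≤ Δ →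
      LinearIndependent F (fun s : S => G' (s : Fin L)))
    (G : Fin m → Fin k → Fin Δ → F)
    (hG : ∀ i j, G i j = if c i j ∈ DC then G' (c i j) else 0) :
    ∀ e ∈ 𝔍, SatisfiesReceiver G e := by
  intro e he
  obtain ⟨v, hv, hvDC, hvdist⟩ := hess e he
  -- The finset of colors appearing on edge `e` within `DC`.
  set T : Finset (Fin L) := (e.biUnion fun i => Finset.image (c i) Finset.univ) ∩ DC with hT
  have hTsub : T ⊆ DC := Finset.inter_subset_right
  have hTcard : T.card ≤ Δ := hΔ e he
  -- colors of v
  have hvT : ∀ j, c v j ∈ T := by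
    intro j
    refine Finset.mem_inter.mpr ⟨Finset.mem_biUnion.mpr ⟨v, hv, ?_⟩, hvDC j⟩
    exact Finset.mem_image.mpr ⟨j, Finset.mem_univ _, rfl⟩
  have hGv : ∀ j, G v j = G' (c v j) := by
    intro j; rw [hG, if_pos (hvDC j)]
  have hliT : LinearIndependent F (fun s : T => G' (s : Fin L)) := hMDS T hTsub hTcard
  refine ⟨v, hv, ?_, ?_⟩
  · -- rank k
    have hliv : LinearIndependent F (fun j : Fin k => G v j) := by
      have : (fun j : Fin k => G v j) =
          (fun s : T => G' (s : Fin L)) ∘ (fun j : Fin k => (⟨c v j, hvT j⟩ : T)) := by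
        funext j; simp [hGv]
      rw [this]
      exact hliT.comp _ (fun a b hab => hinj v (by simpa using hab))
    have := finrank_span_eq_card hliv
    simpa using this
  · -- disjointness
    set Sv : Set {x // x ∈ T} := {x : {x // x ∈ T} | ∃ j : Fin k, (x : Fin L) = c v j} with hSv
    have hdisj := hliT.disjoint_span_image (s := Sv) (t := Svᶜ) disjoint_compl_right
    rw [← disjoint_iff]
    refine hdisj.mono ?_ ?_
    · refine Submodule.span_le.mpr ?_
      rintro x ⟨j, rfl⟩
      refine Submodule.subset_span ⟨⟨c v j, hvT j⟩, ⟨j, rfl⟩, ?_⟩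
      simp [hGv]
    · refine Submodule.span_le.mpr ?_
      rintro x ⟨i, hi, hne, j, rfl⟩
      rw [hG]
      by_cases hdc : c i j ∈ DC
      · rw [if_pos hdc]
        have hiT : c i j ∈ T := by
          refine Finset.mem_inter.mpr ⟨Finset.mem_biUnion.mpr ⟨i, hi, ?_⟩, hdc⟩
          exact Finset.mem_image.mpr ⟨j, Finset.mem_univ _, rfl⟩
        refine Submodule.subset_span ⟨⟨c i j, hiT⟩, ?_, rfl⟩
        rintro ⟨j', hj'⟩
        exact hvdist i hi hne j' j hj'.symm
      · rw [if_neg hdc]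
        exact Submodule.zero_mem _
end
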